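/- arXiv:1306.3911 — 4 statements merged into one kernel-verified Lean document; each statement's English description precedes it below -/
import Mathlib

section
/- For every n ≥ 0 and every bounded measurable function f on X_n, the bootstrap particle estimator of the unnormalized Feynman-Kac measure is unbiased: E[γ_n^{N1}(f)] = γ_n(f), where γ_n^{N1}(f) = η_n^{N1}(f) · ∏_{0 ≤ p < n} η_p^{N1}(G_p). -/
open MeasureTheory ProbabilityTheory Filter Finset
open scoped ENNReal NNReal Topology Classical

noncomputable section

namespace FKisland

/-- Unnormalized Feynman-Kac measures `γ_n`:
`γ_0 = init` and `γ_{n+1}(f) = γ_n (G_n ⋅ step_{n+1} f)`. -/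
def gammaSeq {S : ℕ → Type*} [∀ n, MeasurableSpace (S n)]
    (init : Measure (S 0)) (step : ∀ n, S n → Measure (S (n + 1)))
    (G : ∀ n, S n → ℝ) : (n : ℕ) → Measure (S n)
  | 0 => init
  | n + 1 => ((gammaSeq init step G n).withDensity
      (fun x => ENNReal.ofReal (G n x))).bind (step n)

/-- Normalized Feynman-Kac measures `η_n = γ_n / γ_n(1)`. -/
def etaSeq {S : ℕ → Type*} [∀ n, MeasurableSpace (S n)]
    (init : Measure (S 0)) (step : ∀ n, S n → Measure (S (n + 1)))
    (G : ∀ n, S n → ℝ) (n : ℕ) : Measure (S n) :=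
  (gammaSeq init step G n Set.univ)⁻¹ • gammaSeq init step G n

/-- Feynman-Kac semigroup `Q_{p,p+k} = Q_{p+1} Q_{p+2} ⋯ Q_{p+k}` acting on functions,
where `Q_{l+1} g (x) = G_l(x) ∫ g(y) step_l(x,dy)`. -/
def Qop {S : ℕ → Type*} [∀ n, MeasurableSpace (S n)]
    (step : ∀ n, S n → Measure (S (n + 1))) (G : ∀ n, S n → ℝ) :
    (p k : ℕ) → (S (p + k) → ℝ) → S p → ℝ
  | _, 0, f => f
  | p, k + 1, f => Qop step G p k (fun x => G (p + k) x * ∫ y, f y ∂(step (p + k) x))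

/-- `Q_{p,n}` for `p ≤ n`. -/
def Qle {S : ℕ → Type*} [∀ n, MeasurableSpace (S n)]
    (step : ∀ n, S n → Measure (S (n + 1))) (G : ∀ n, S n → ℝ)
    {p n : ℕ} (h : p ≤ n) (f : S n → ℝ) : S p → ℝ :=
  Qop step G p (n - p) (fun y => f (cast (congrArg S (Nat.add_sub_cancel' h)) y))

/-- Normalized semigroup `Q̄_{p,p+k} = Q_{p,p+k} / η_p(Q_{p,p+k} 1)`. -/
def Qbar {S : ℕ → Type*} [∀ n, MeasurableSpace (S n)]
    (init : Measure (S 0)) (step : ∀ n, S n → Measure (S (n + 1)))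
    (G : ∀ n, S n → ℝ) (p k : ℕ) (f : S (p + k) → ℝ) : S p → ℝ :=
  fun x => Qop step G p k f x /
    ∫ z, Qop step G p k (fun _ => (1 : ℝ)) z ∂(etaSeq init step G p)

/-- Normalized semigroup `Q̄_{p,n}` for `p ≤ n`. -/
def Qbarle {S : ℕ → Type*} [∀ n, MeasurableSpace (S n)]
    (init : Measure (S 0)) (step : ∀ n, S n → Measure (S (n + 1)))
    (G : ∀ n, S n → ℝ) {p n : ℕ} (h : p ≤ n) (f : S n → ℝ) : S p → ℝ :=
  fun x => Qle step G h f x /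
    ∫ z, Qle step G h (fun _ => (1 : ℝ)) z ∂(etaSeq init step G p)

/-- Boltzmann-Gibbs transformation `Ψ(μ)(dx) = G(x) μ(dx) / μ(G)`. -/
def boltzmannGibbs {α : Type*} [MeasurableSpace α] (G : α → ℝ) (μ : Measure α) :
    Measure α :=
  (∫⁻ x, ENNReal.ofReal (G x) ∂μ)⁻¹ • μ.withDensity fun x => ENNReal.ofReal (G x)

/-- One bootstrap selection/mutation step (`boldM_{n+1}`): each of the `N` new particles is
drawn independently from the mixture `Σ_j G(x^j) M(x^j, ⋅) / Σ_k G(x^k)`. -/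
def bootStep {α β : Type*} [MeasurableSpace α] [MeasurableSpace β]
    (M : α → Measure β) (G : α → ℝ) {N : ℕ} (x : Fin N → α) :
    Measure (Fin N → β) :=
  Measure.pi fun _ : Fin N =>
    (∑ k, ENNReal.ofReal (G (x k)))⁻¹ • ∑ j, ENNReal.ofReal (G (x j)) • M (x j)

/-- ε-bootstrap selection kernel
`S_{n,μ}(x, ⋅) = ε G(x) δ_x + (1 - ε G(x)) Ψ(μ)`. -/
def epsSelect {α : Type*} [MeasurableSpace α]
    (G : α → ℝ) (ε : ℝ) (μ : Measure α) (x : α) : Measure α :=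
  ENNReal.ofReal (ε * G x) • Measure.dirac x
    + ENNReal.ofReal (1 - ε * G x) • boltzmannGibbs G μ

/-- Empirical measure of a configuration. -/
def empMeasure {α : Type*} [MeasurableSpace α] {N : ℕ} (x : Fin N → α) : Measure α :=
  (N : ℝ≥0∞)⁻¹ • ∑ i, Measure.dirac (x i)

/-- One ε-bootstrap particle step: coordinate `i` moves with `S_{n, m(x)} M` started at `x^i`. -/
def epsBootStep {α β : Type*} [MeasurableSpace α] [MeasurableSpace β]
    (M : α → Measure β) (G : α → ℝ) (ε : ℝ) {N : ℕ} (x : Fin N → α) :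
    Measure (Fin N → β) :=
  Measure.pi fun i : Fin N => (epsSelect G ε (empMeasure x) (x i)).bind M

/-- One ESS particle step on weighted configurations: if the effective sample size
`(Σ w G)² / Σ (wG)²` is at least `a N`, keep the particles (mutating them) and multiply the
weights by the potential; otherwise resample multinomially and reset all weights to 1. -/
def essStep {α β : Type*} [MeasurableSpace α] [MeasurableSpace β]
    (M : α → Measure β) (G : α → ℝ) (a : ℝ) {N : ℕ} (xw : Fin N → α × ℝ) :
    Measure (Fin N → β × ℝ) :=
  if (∑ i, (xw i).2 * G (xw i).1) ^ 2 / (∑ i, ((xw i).2 * G (xw i).1) ^ 2) ≥ a * N then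
    Measure.pi fun i : Fin N => (M (xw i).1).map fun y => (y, (xw i).2 * G (xw i).1)
  else
    Measure.pi fun _ : Fin N =>
      ((∑ k, ENNReal.ofReal ((xw k).2 * G (xw k).1))⁻¹ •
          ∑ j, ENNReal.ofReal ((xw j).2 * G (xw j).1) • M (xw j).1).map
        fun y => (y, (1 : ℝ))

/-- The process `ξ` on the time-varying state spaces `S n` is a Markov chain with initial
law `init` and transition steps `step`, characterized through products of bounded
measurable functionals of the path. -/
def IsMarkovApprox {Ω : Type*} [MeasurableSpace Ω] (P : Measure Ω)
    {S : ℕ → Type*} [∀ n, MeasurableSpace (S n)]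
    (init : Measure (S 0)) (step : ∀ n, S n → Measure (S (n + 1)))
    (ξ : ∀ n, Ω → S n) : Prop :=
  (∀ n, Measurable (ξ n)) ∧
  P.map (ξ 0) = init ∧
  ∀ (n : ℕ) (F : ∀ p, S p → ℝ),
    (∀ p, Measurable (F p)) → (∀ p, ∃ C, ∀ x, |F p x| ≤ C) →
    ∀ (H : S (n + 1) → ℝ), Measurable H → (∃ C, ∀ x, |H x| ≤ C) →
      ∫ ω, (∏ p ∈ Finset.range (n + 1), F p (ξ p ω)) * H (ξ (n + 1) ω) ∂P
        = ∫ ω, (∏ p ∈ Finset.range (n + 1), F p (ξ p ω)) *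
            ∫ y, H y ∂(step n (ξ n ω)) ∂P

/-- Bootstrap local sampling errors `W_p^{N1}` along a configuration path `ξ`:
`W_0^{N1}(g) = √N1 (η_0^{N1}(g) - η_0(g))` and for `p ≥ 1`,
`W_p^{N1}(g) = √N1 (η_p^{N1}(g) - Φ_p(η_{p-1}^{N1})(g))` with `Φ_p(μ) = Ψ_{p-1}(μ) M_p`. -/
def localW {X : ℕ → Type*} [∀ n, MeasurableSpace (X n)]
    (η0 : Measure (X 0)) (M : ∀ n, Kernel (X n) (X (n + 1))) (G : ∀ n, X n → ℝ)
    (N1 : ℕ) (ξ : ∀ p, Fin N1 → X p) : (p : ℕ) → (X p → ℝ) → ℝ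
  | 0, g => Real.sqrt N1 * (((N1 : ℝ)⁻¹ * ∑ i, g (ξ 0 i)) - ∫ x, g x ∂η0)
  | p + 1, g => Real.sqrt N1 * (((N1 : ℝ)⁻¹ * ∑ i, g (ξ (p + 1) i))
      - (∑ i, G p (ξ p i) * ∫ y, g y ∂(M p (ξ p i))) / ∑ i, G p (ξ p i))

end FKisland

open FKisland

/-! Both sides satisfy the same recursion in `n`, with `f` replaced by `G_n · M_{n+1} f`.
For the Feynman-Kac measures this is the definition of `γ_{n+1}`. For the particle system,
conditioning on `ξ_n` replaces `η_{n+1}^N(f)` by its conditional mean, which for the bootstrap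
kernel is `η_n^N(G_n · M_{n+1} f) / η_n^N(G_n)`; the denominator cancels the last factor of
`∏_{p ≤ n} η_p^N(G_p)`. Induction on `n`, generalizing `f`, then reduces everything to
`E[η_0^N(f)] = η_0(f)`, which holds since `ξ_0` has law `η_0^{⊗N}`. -/

section Integrals

variable {α β : Type*} [MeasurableSpace α] [MeasurableSpace β]

lemma integrable_of_abs_le (μ : Measure α) [IsFiniteMeasure μ] {f : α → ℝ}
    (hf : Measurable f) {C : ℝ} (hC : ∀ x, |f x| ≤ C) : Integrable f μ :=
  .of_bound hf.aestronglyMeasurable C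
    (ae_of_all _ fun x => (Real.norm_eq_abs _).trans_le (hC x))

lemma abs_integral_le_of_abs_le (μ : Measure α) [IsProbabilityMeasure μ] {f : α → ℝ}
    {C : ℝ} (hC : ∀ x, |f x| ≤ C) : |∫ x, f x ∂μ| ≤ C := by
  simpa using norm_integral_le_of_norm_le_const (μ := μ)
    (ae_of_all _ fun x => (Real.norm_eq_abs _).trans_le (hC x))

lemma measurable_integral_kernel (κ : Kernel α β) {f : β → ℝ} (hf : Measurable f) :
    Measurable fun a => ∫ y, f y ∂κ a :=
  hf.stronglyMeasurable.integral_kernel.measurable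

lemma exists_abs_mul_integral_le (κ : Kernel α β) [IsMarkovKernel κ] {g : α → ℝ} {f : β → ℝ}
    (hg : ∃ C, ∀ x, |g x| ≤ C) (hf : ∃ C, ∀ y, |f y| ≤ C) :
    ∃ C, ∀ x, |g x * ∫ y, f y ∂κ x| ≤ C := by
  obtain ⟨Cg, hCg⟩ := hg
  obtain ⟨Cf, hCf⟩ := hf
  refine ⟨Cg * Cf, fun x => ?_⟩
  rw [abs_mul]
  exact mul_le_mul (hCg x) (abs_integral_le_of_abs_le _ hCf) (abs_nonneg _)
    ((abs_nonneg _).trans (hCg x))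

lemma integral_bind_kernel (μ : Measure α) [SFinite μ] (κ : Kernel α β) [IsSFiniteKernel κ]
    {f : β → ℝ} (hf : Integrable f (κ ∘ₘ μ)) :
    ∫ y, f y ∂(κ ∘ₘ μ) = ∫ a, ∫ y, f y ∂κ a ∂μ := by
  rw [← Measure.snd_compProd] at hf ⊢
  rw [Measure.snd, integral_map measurable_snd.aemeasurable hf.aestronglyMeasurable]
  exact Measure.integral_compProd (f := fun z => f z.2) (hf.comp_measurable measurable_snd)

lemma isFiniteMeasure_withDensity_ofReal_of_le (μ : Measure α) [IsFiniteMeasure μ]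
    {G : α → ℝ} {C : ℝ} (hC : ∀ x, G x ≤ C) :
    IsFiniteMeasure (μ.withDensity fun x => ENNReal.ofReal (G x)) := by
  refine isFiniteMeasure_withDensity (ne_top_of_le_ne_top ?_ (lintegral_mono fun x =>
    ENNReal.ofReal_le_ofReal (hC x)))
  simp [lintegral_const, ENNReal.mul_eq_top]

lemma integral_withDensity_ofReal (μ : Measure α) {G : α → ℝ} (hGm : Measurable G)
    (hG0 : ∀ x, 0 ≤ G x) (f : α → ℝ) :
    ∫ x, f x ∂(μ.withDensity fun x => ENNReal.ofReal (G x)) = ∫ x, G x * f x ∂μ := by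
  rw [integral_withDensity_eq_integral_toReal_smul hGm.ennreal_ofReal
    (ae_of_all _ fun _ => ENNReal.ofReal_lt_top)]
  simp only [ENNReal.toReal_ofReal (hG0 _), smul_eq_mul]

end Integrals

section FeynmanKac

variable {X : ℕ → Type*} [∀ n, MeasurableSpace (X n)] (η0 : Measure (X 0))
  (M : ∀ n, Kernel (X n) (X (n + 1))) [∀ n, IsMarkovKernel (M n)] (G : ∀ n, X n → ℝ)

lemma isFiniteMeasure_gammaSeq [IsFiniteMeasure η0] (hGbdd : ∀ n, ∃ C, ∀ x, G n x ≤ C)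
    (n : ℕ) : IsFiniteMeasure (gammaSeq η0 (fun k x => M k x) G n) := by
  induction n with
  | zero => assumption
  | succ n ih =>
    obtain ⟨C, hC⟩ := hGbdd n
    have := isFiniteMeasure_withDensity_ofReal_of_le (gammaSeq η0 (fun k x => M k x) G n) hC
    change IsFiniteMeasure (M n ∘ₘ _)
    infer_instance

lemma integral_gammaSeq_succ [IsFiniteMeasure η0] (hGbdd : ∀ n, ∃ C, ∀ x, G n x ≤ C) {n : ℕ}
    (hGm : Measurable (G n)) (hG0 : ∀ x, 0 ≤ G n x) {f : X (n + 1) → ℝ} (hf : Measurable f)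
    (hfb : ∃ C, ∀ y, |f y| ≤ C) :
    ∫ y, f y ∂gammaSeq η0 (fun k x => M k x) G (n + 1)
      = ∫ x, G n x * ∫ y, f y ∂M n x ∂gammaSeq η0 (fun k x => M k x) G n := by
  have := isFiniteMeasure_gammaSeq η0 M G hGbdd n
  obtain ⟨C, hC⟩ := hGbdd n
  have := isFiniteMeasure_withDensity_ofReal_of_le (gammaSeq η0 (fun k x => M k x) G n) hC
  obtain ⟨Cf, hCf⟩ := hfb
  change ∫ y, f y ∂(M n ∘ₘ _) = _
  rw [integral_bind_kernel _ _ (integrable_of_abs_le _ hf hCf),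
    integral_withDensity_ofReal _ hGm hG0]

end FeynmanKac

section BootstrapParticles

variable {α β : Type*} [MeasurableSpace β] {N : ℕ}

/-- The particle estimate `η^N(f)` of the configuration `x`. -/
def empMean (f : α → ℝ) (x : Fin N → α) : ℝ := (N : ℝ)⁻¹ * ∑ i, f (x i)

def selectionMutation (M : α → Measure β) (G : α → ℝ) (x : Fin N → α) : Measure β :=
  (∑ k, ENNReal.ofReal (G (x k)))⁻¹ • ∑ j, ENNReal.ofReal (G (x j)) • M (x j)

lemma bootStep_eq_pi [MeasurableSpace α] (M : α → Measure β) (G : α → ℝ) (x : Fin N → α) :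
    bootStep M G x = Measure.pi fun _ => selectionMutation M G x := rfl

lemma measurable_empMean [MeasurableSpace α] {f : α → ℝ} (hf : Measurable f) :
    Measurable (empMean (N := N) f) :=
  measurable_const.mul (Finset.measurable_sum _ fun i _ => hf.comp (measurable_pi_apply i))

lemma exists_abs_empMean_le {f : α → ℝ} (hfb : ∃ C, ∀ x, |f x| ≤ C) :
    ∃ C, ∀ x : Fin N → α, |empMean f x| ≤ C := by
  obtain ⟨C, hC⟩ := hfb
  refine ⟨|C|, fun x => ?_⟩
  calc |empMean f x| ≤ (N : ℝ)⁻¹ * ∑ _i : Fin N, |C| := by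
        rw [empMean, abs_mul, abs_of_nonneg (by positivity)]
        gcongr
        exact (abs_sum_le_sum_abs _ _).trans (sum_le_sum fun i _ => (hC _).trans (le_abs_self C))
    _ ≤ |C| := by
        rw [sum_const, card_univ, Fintype.card_fin, nsmul_eq_mul, ← mul_assoc]
        exact mul_le_of_le_one_left (abs_nonneg C) (inv_mul_le_one_of_le₀ le_rfl (by positivity))

lemma empMean_pos (hN : N ≠ 0) {f : α → ℝ} (hf : ∀ a, 0 < f a) (x : Fin N → α) :
    0 < empMean f x :=
  have : NeZero N := ⟨hN⟩
  mul_pos (by positivity) (sum_pos (fun i _ => hf (x i)) univ_nonempty)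

lemma integral_empMean_pi [MeasurableSpace α] (ν : Measure α) [IsProbabilityMeasure ν]
    (hN : N ≠ 0) {f : α → ℝ} (hf : Measurable f) (hfb : ∃ C, ∀ x, |f x| ≤ C) :
    ∫ x, empMean f x ∂Measure.pi (fun _ : Fin N => ν) = ∫ y, f y ∂ν := by
  obtain ⟨C, hC⟩ := hfb
  have h_eval (i : Fin N) : ∫ x, f (x i) ∂Measure.pi (fun _ => ν) = ∫ y, f y ∂ν := by
    conv_rhs => rw [← (measurePreserving_eval (fun _ => ν) i).map_eq]
    exact (integral_map (measurable_pi_apply i).aemeasurable hf.aestronglyMeasurable).symm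
  simp only [empMean]
  rw [integral_const_mul, integral_finsetSum _ fun i _ =>
    integrable_of_abs_le (f := fun x : Fin N → α => f (x i)) _ (hf.comp (measurable_pi_apply i))
      fun x => hC (x i)]
  simp only [h_eval, sum_const, card_univ, Fintype.card_fin, nsmul_eq_mul]
  exact inv_mul_cancel_left₀ (Nat.cast_ne_zero.2 hN) _

variable (M : α → Measure β) [∀ a, IsProbabilityMeasure (M a)] {G : α → ℝ}

lemma isProbabilityMeasure_selectionMutation (hN : N ≠ 0) (hG : ∀ a, 0 < G a)
    (x : Fin N → α) : IsProbabilityMeasure (selectionMutation M G x) := by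
  have : NeZero N := ⟨hN⟩
  have hsum_ne_zero : ∑ k, ENNReal.ofReal (G (x k)) ≠ 0 :=
    fun h => (ENNReal.ofReal_pos.2 (hG (x 0))).ne' (sum_eq_zero_iff.1 h 0 (mem_univ _))
  have hsum_ne_top : ∑ k, ENNReal.ofReal (G (x k)) ≠ ⊤ :=
    ENNReal.sum_ne_top.2 fun k _ => ENNReal.ofReal_ne_top
  constructor
  simp only [selectionMutation, Measure.smul_apply, Measure.finsetSum_apply, measure_univ,
    smul_eq_mul, mul_one]
  exact ENNReal.inv_mul_cancel hsum_ne_zero hsum_ne_top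

lemma integral_selectionMutation (hG0 : ∀ a, 0 ≤ G a) (x : Fin N → α) {f : β → ℝ}
    (hf : Measurable f) (hfb : ∃ C, ∀ y, |f y| ≤ C) :
    ∫ y, f y ∂selectionMutation M G x
      = (∑ j, G (x j) * ∫ y, f y ∂M (x j)) / ∑ k, G (x k) := by
  obtain ⟨C, hC⟩ := hfb
  rw [selectionMutation, integral_smul_measure,
    integral_finsetSum_measure fun j _ => (integrable_of_abs_le _ hf hC).smul_measure
      ENNReal.ofReal_ne_top]
  simp only [integral_smul_measure, ENNReal.toReal_inv, smul_eq_mul,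
    ENNReal.toReal_sum fun k _ => ENNReal.ofReal_ne_top, ENNReal.toReal_ofReal (hG0 _)]
  rw [div_eq_inv_mul]

lemma integral_empMean_bootStep [MeasurableSpace α] (hN : N ≠ 0) (hG : ∀ a, 0 < G a)
    (x : Fin N → α) {f : β → ℝ} (hf : Measurable f) (hfb : ∃ C, ∀ y, |f y| ≤ C) :
    ∫ y, empMean f y ∂bootStep M G x
      = empMean (fun a => G a * ∫ y, f y ∂M a) x / empMean G x := by
  have := isProbabilityMeasure_selectionMutation M hN hG x
  rw [bootStep_eq_pi, integral_empMean_pi _ hN hf hfb,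
    integral_selectionMutation M (fun a => (hG a).le) x hf hfb, empMean, empMean,
    mul_div_mul_left _ _ (inv_ne_zero (Nat.cast_ne_zero.2 hN))]

lemma integral_empMean_mul_prod_succ {X : ℕ → Type*} [∀ n, MeasurableSpace (X n)]
    (M : ∀ n, Kernel (X n) (X (n + 1))) [∀ n, IsMarkovKernel (M n)] {G : ∀ n, X n → ℝ}
    (hGm : ∀ n, Measurable (G n)) (hGb : ∀ n, ∃ C, ∀ x, |G n x| ≤ C)
    (hG : ∀ n x, 0 < G n x) {Ω : Type*} [MeasurableSpace Ω] (P : Measure Ω) {N : ℕ}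
    (hN : N ≠ 0) (init : Measure (Fin N → X 0)) (ξ : ∀ p, Ω → (Fin N → X p))
    (hchain : IsMarkovApprox (S := fun p => Fin N → X p) P init
      (fun k x => bootStep (fun a => M k a) (G k) x) ξ)
    (n : ℕ) {f : X (n + 1) → ℝ} (hf : Measurable f) (hfb : ∃ C, ∀ y, |f y| ≤ C) :
    ∫ ω, empMean f (ξ (n + 1) ω) * ∏ p ∈ range (n + 1), empMean (G p) (ξ p ω) ∂P
      = ∫ ω, empMean (fun x => G n x * ∫ y, f y ∂M n x) (ξ n ω)
          * ∏ p ∈ range n, empMean (G p) (ξ p ω) ∂P := by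
  have h_markov := hchain.2.2 n (fun p => empMean (G p)) (fun p => measurable_empMean (hGm p))
    (fun p => exists_abs_empMean_le (hGb p)) (empMean f) (measurable_empMean hf)
    (exists_abs_empMean_le hfb)
  simp only [mul_comm (empMean f _)] at h_markov ⊢
  rw [h_markov]
  refine integral_congr_ae (ae_of_all _ fun ω => ?_)
  have h_pos := empMean_pos hN (hG n) (ξ n ω)
  dsimp only
  rw [integral_empMean_bootStep (fun a => M n a) hN (hG n) (ξ n ω) hf hfb, prod_range_succ]
  field_simp

end BootstrapParticles

theorem statement5_general {X : ℕ → Type*} [∀ n, MeasurableSpace (X n)]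
    (η0 : Measure (X 0)) [IsProbabilityMeasure η0]
    (M : ∀ n, Kernel (X n) (X (n + 1))) [∀ n, IsMarkovKernel (M n)]
    (G : ∀ n, X n → ℝ)
    (hGmeas : ∀ n, Measurable (G n))
    (hGbdd : ∀ n, ∃ C, ∀ x, G n x ≤ C)
    (hGpos : ∀ n x, 0 < G n x)
    {Ω : Type*} [MeasurableSpace Ω] (P : Measure Ω)
    {N1 : ℕ} (hN1 : 1 ≤ N1)
    (ξ : ∀ p, Ω → (Fin N1 → X p))
    (hchain : IsMarkovApprox (S := fun p => Fin N1 → X p) P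
      (Measure.pi fun _ : Fin N1 => η0)
      (fun k x => bootStep (fun a => M k a) (G k) x) ξ)
    (n : ℕ) (f : X n → ℝ) (hf : Measurable f) (hfb : ∃ C, ∀ x, |f x| ≤ C) :
    ∫ ω, ((N1 : ℝ)⁻¹ * ∑ i, f (ξ n ω i)) *
        ∏ p ∈ Finset.range n, ((N1 : ℝ)⁻¹ * ∑ i, G p (ξ p ω i)) ∂P
      = ∫ x, f x ∂(gammaSeq (S := X) η0 (fun k x => M k x) G n) := by
  have hN : N1 ≠ 0 := by omega
  have hGb (n : ℕ) : ∃ C, ∀ x, |G n x| ≤ C := by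
    obtain ⟨C, hC⟩ := hGbdd n
    exact ⟨C, fun x => (abs_of_pos (hGpos n x)).trans_le (hC x)⟩
  change ∫ ω, empMean f (ξ n ω) * ∏ p ∈ range n, empMean (G p) (ξ p ω) ∂P = _
  induction n with
  | zero =>
    simp only [range_zero, prod_empty, mul_one]
    rw [← integral_map (hchain.1 0).aemeasurable (measurable_empMean hf).aestronglyMeasurable,
      hchain.2.1, integral_empMean_pi _ hN hf hfb]
    rfl
  | succ n ih =>
    rw [integral_empMean_mul_prod_succ M hGmeas hGb hGpos P hN _ ξ hchain n hf hfb,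
      ih (fun x => G n x * ∫ y, f y ∂M n x) ((hGmeas n).mul (measurable_integral_kernel _ hf))
        (exists_abs_mul_integral_le _ (hGb n) hfb),
      integral_gammaSeq_succ η0 M G hGbdd (hGmeas n) (fun x => (hGpos n x).le) hf hfb]

/-- Unbiasedness of the bootstrap particle estimator of the unnormalized
Feynman-Kac measures: `E[γ_n^{N1}(f)] = γ_n(f)`,
where `γ_n^{N1}(f) = η_n^{N1}(f) ⋅ ∏_{0 ≤ p < n} η_p^{N1}(G_p)`. -/
theorem statement5 {X : ℕ → Type*} [∀ n, MeasurableSpace (X n)]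
    (η0 : Measure (X 0)) [IsProbabilityMeasure η0]
    (M : ∀ n, Kernel (X n) (X (n + 1))) [∀ n, IsMarkovKernel (M n)]
    (G : ∀ n, X n → ℝ)
    (hGmeas : ∀ n, Measurable (G n))
    (hGbdd : ∀ n, ∃ C, ∀ x, G n x ≤ C)
    (hGpos : ∀ n x, 0 < G n x)
    {Ω : Type*} [MeasurableSpace Ω] (P : Measure Ω) [IsProbabilityMeasure P]
    {N1 : ℕ} (hN1 : 1 ≤ N1)
    (ξ : ∀ p, Ω → (Fin N1 → X p))
    (hchain : IsMarkovApprox (S := fun p => Fin N1 → X p) P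
      (Measure.pi fun _ : Fin N1 => η0)
      (fun k x => bootStep (fun a => M k a) (G k) x) ξ)
    (n : ℕ) (f : X n → ℝ) (hf : Measurable f) (hfb : ∃ C, ∀ x, |f x| ≤ C) :
    ∫ ω, ((N1 : ℝ)⁻¹ * ∑ i, f (ξ n ω i)) *
        ∏ p ∈ Finset.range n, ((N1 : ℝ)⁻¹ * ∑ i, G p (ξ p ω i)) ∂P
      = ∫ x, f x ∂(gammaSeq (S := X) η0 (fun k x => M k x) G n) :=
  statement5_general η0 M G hGmeas hGbdd hGpos P hN1 ξ hchain n f hf hfb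
end
end

section
/- (Theorem 2.1) Consider the island Feynman-Kac model on the product spaces X_n^{N1} with transitions boldM_{n+1}, potentials boldG_n(x) = N1^{-1} Σ_{i=1}^{N1} G_n(x^i), and initial distribution η_0^{⊗N1}: its unnormalized measures are boldΓ_n(F) = E[F(ξ_n) ∏_{0≤p<n} boldG_p(ξ_p)] and boldη_n = boldΓ_n / boldΓ_n(1). Then for any bounded measurable f on X_n and the lifted function F(x) = N1^{-1} Σ_{i=1}^{N1} f(x^i), one has boldΓ_n(F) = γ_n(f) and boldη_n(F) = η_n(f), where γ_n and η_n are the unnormalized and normalized Feynman-Kac measures of the original model. -/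
open MeasureTheory ProbabilityTheory Filter Finset
open scoped ENNReal NNReal Topology Classical

noncomputable section

open FKisland

/-!
Write `m(x)(h) = N⁻¹ Σᵢ h(xⁱ)` for the empirical mean of a configuration. Under the bootstrap
kernel every new particle is drawn from the mixture `Σⱼ G(xʲ) M(xʲ, ·) / Σₖ G(xᵏ)`, so
`m(x)(G) · ∫ m(y)(h) boldM(x, dy) = m(x)(G · M h)`. Combined with the Markov property this shows
that `h ↦ E[m(ξ_n)(h) ∏_{p<n} m(ξ_p)(G_p)]` satisfies the recursion `γ_{n+1}(h) = γ_n(G_n · M h)`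
of the Feynman-Kac measures and starts at `η_0`, so it equals `γ_n` by induction. The normalized
identity is the case `h = 1` together with the definition of `η_n`.
-/

namespace FKisland

section Measure

variable {α β : Type*} [MeasurableSpace α] [MeasurableSpace β]

lemma integrable_of_abs_le {μ : Measure α} [IsFiniteMeasure μ] {f : α → ℝ} (hf : Measurable f)
    {C : ℝ} (hC : ∀ x, |f x| ≤ C) : Integrable f μ :=
  .of_bound hf.aestronglyMeasurable C (.of_forall fun x => by simpa using hC x)

lemma abs_integral_le_of_abs_le {μ : Measure α} [IsProbabilityMeasure μ] {f : α → ℝ} {C : ℝ}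
    (hC : ∀ x, |f x| ≤ C) : |∫ x, f x ∂μ| ≤ C := by
  simpa using norm_integral_le_of_norm_le_const (μ := μ) (f := f) (C := C)
    (.of_forall fun x => by simpa using hC x)

lemma integral_bind_kernel {μ : Measure α} [SFinite μ] {κ : Kernel α β} [IsSFiniteKernel κ]
    {f : β → ℝ} (hf : Integrable f (μ.bind κ)) :
    ∫ y, f y ∂(μ.bind κ) = ∫ x, ∫ y, f y ∂(κ x) ∂μ := by
  rw [← Measure.integral_compProd ((Measure.integrable_compProd_snd_iff hf.1).2 hf)]
  rw [← Measure.snd_compProd μ κ, Measure.snd,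
    integral_map measurable_snd.aemeasurable
      (by rw [← Measure.snd, Measure.snd_compProd]; exact hf.1)]

lemma isFiniteMeasure_withDensity_ofReal_of_le {μ : Measure α} [IsFiniteMeasure μ] {g : α → ℝ}
    {C : ℝ} (hC : ∀ x, g x ≤ C) :
    IsFiniteMeasure (μ.withDensity fun x => ENNReal.ofReal (g x)) := by
  refine ⟨?_⟩
  rw [withDensity_apply _ MeasurableSet.univ, Measure.restrict_univ]
  calc ∫⁻ x, ENNReal.ofReal (g x) ∂μ ≤ ∫⁻ _, ENNReal.ofReal C ∂μ :=
        lintegral_mono fun x => ENNReal.ofReal_le_ofReal (hC x)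
    _ < ⊤ := by simp [lintegral_const, ENNReal.mul_lt_top]

lemma integral_inv_smul_sum_smul {ι : Type*} [Fintype ι] (w : ι → ℝ) (hw : ∀ j, 0 ≤ w j)
    (μ : ι → Measure β) {f : β → ℝ} (hf : ∀ j, Integrable f (μ j)) :
    ∫ y, f y ∂((∑ k, ENNReal.ofReal (w k))⁻¹ • ∑ j, ENNReal.ofReal (w j) • μ j)
      = (∑ k, w k)⁻¹ * ∑ j, w j * ∫ y, f y ∂(μ j) := by
  rw [integral_smul_measure, integral_finsetSum_measure fun j _ =>
    (hf j).smul_measure ENNReal.ofReal_ne_top, ENNReal.toReal_inv,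
    ENNReal.toReal_sum fun k _ => ENNReal.ofReal_ne_top, smul_eq_mul]
  simp only [integral_smul_measure, ENNReal.toReal_ofReal (hw _), smul_eq_mul]

lemma isProbabilityMeasure_inv_smul_sum_smul {ι : Type*} [Fintype ι] [Nonempty ι]
    (w : ι → ℝ) (hw : ∀ j, 0 < w j) (μ : ι → Measure β) [∀ j, IsProbabilityMeasure (μ j)] :
    IsProbabilityMeasure ((∑ k, ENNReal.ofReal (w k))⁻¹ • ∑ j, ENNReal.ofReal (w j) • μ j) := by
  constructor
  have hpos : ∑ k, ENNReal.ofReal (w k) ≠ 0 :=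
    (Finset.sum_eq_zero_iff.not.2 fun h =>
      (ENNReal.ofReal_pos.2 (hw (Classical.arbitrary ι))).ne' (h _ (Finset.mem_univ _)))
  have hfin : ∑ k, ENNReal.ofReal (w k) ≠ ⊤ :=
    ENNReal.sum_ne_top.2 fun _ _ => ENNReal.ofReal_ne_top
  simp [Measure.finsetSum_apply, ENNReal.inv_mul_cancel hpos hfin]

end Measure

section Empirical

variable {α : Type*}

def empiricalMean {N : ℕ} (f : α → ℝ) (x : Fin N → α) : ℝ := (N : ℝ)⁻¹ * ∑ i, f (x i)

lemma measurable_empiricalMean [MeasurableSpace α] {N : ℕ} {f : α → ℝ} (hf : Measurable f) :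
    Measurable (empiricalMean (N := N) f) := by
  unfold empiricalMean; fun_prop

lemma exists_abs_empiricalMean_le {N : ℕ} {f : α → ℝ} (hf : ∃ C, ∀ x, |f x| ≤ C) :
    ∃ C, ∀ x : Fin N → α, |empiricalMean f x| ≤ C := by
  obtain ⟨C, hC⟩ := hf
  refine ⟨max C 0, fun x => ?_⟩
  have hsum : |∑ i, f (x i)| ≤ N * max C 0 := by
    calc |∑ i, f (x i)| ≤ ∑ i, |f (x i)| := Finset.abs_sum_le_sum_abs _ _
      _ ≤ ∑ _i : Fin N, max C 0 := Finset.sum_le_sum fun i _ => (hC _).trans (le_max_left _ _)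
      _ = N * max C 0 := by simp
  rcases N.eq_zero_or_pos with rfl | hN
  · simp [empiricalMean]
  rw [empiricalMean, abs_mul, abs_of_pos (by positivity), inv_mul_le_iff₀ (by positivity)]
  exact hsum

lemma empiricalMean_one {N : ℕ} [NeZero N] (x : Fin N → α) :
    empiricalMean (fun _ => (1 : ℝ)) x = 1 := by
  simp [empiricalMean]

lemma integral_empiricalMean_pi [MeasurableSpace α] {N : ℕ} [NeZero N] (ν : Measure α)
    [IsProbabilityMeasure ν] {f : α → ℝ} (hf : Integrable f ν) :
    ∫ x, empiricalMean f x ∂(Measure.pi fun _ : Fin N => ν) = ∫ y, f y ∂ν := by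
  simp only [empiricalMean]
  rw [integral_const_mul,
    integral_finsetSum _ fun i _ => integrable_comp_eval (μ := fun _ => ν) hf,
    Finset.sum_congr rfl fun i _ =>
      integral_comp_eval (μ := fun _ : Fin N => ν) (i := i) hf.aestronglyMeasurable]
  simp [NeZero.ne]

end Empirical

lemma empiricalMean_mul_integral_bootStep {α β : Type*} [MeasurableSpace α] [MeasurableSpace β]
    (M : α → Measure β) [∀ a, IsProbabilityMeasure (M a)] {G : α → ℝ} (hG : ∀ a, 0 < G a)
    {N : ℕ} [NeZero N] (x : Fin N → α) {f : β → ℝ} (hf : Measurable f) {C : ℝ}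
    (hC : ∀ y, |f y| ≤ C) :
    empiricalMean G x * ∫ y, empiricalMean f y ∂(bootStep M G x)
      = empiricalMean (fun a => G a * ∫ y, f y ∂(M a)) x := by
  have := isProbabilityMeasure_inv_smul_sum_smul (fun j => G (x j)) (fun _ => hG _)
    (fun j => M (x j))
  have hsum : 0 < ∑ k, G (x k) := Finset.sum_pos (fun k _ => hG _) Finset.univ_nonempty
  rw [bootStep, integral_empiricalMean_pi _ (integrable_of_abs_le hf hC),
    integral_inv_smul_sum_smul _ (fun j => (hG _).le) (fun j => M (x j))
      (fun _ => integrable_of_abs_le hf hC)]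
  simp only [empiricalMean]
  field_simp

section FeynmanKac

variable {X : ℕ → Type*} [∀ n, MeasurableSpace (X n)] {η0 : Measure (X 0)}
  {M : ∀ n, Kernel (X n) (X (n + 1))} {G : ∀ n, X n → ℝ}

lemma isFiniteMeasure_gammaSeq [IsFiniteMeasure η0] [∀ n, IsFiniteKernel (M n)]
    (hGbdd : ∀ n, ∃ C, ∀ x, G n x ≤ C) (n : ℕ) :
    IsFiniteMeasure (gammaSeq η0 (fun k x => M k x) G n) := by
  induction n with
  | zero => show IsFiniteMeasure η0; infer_instance
  | succ n ih =>
    obtain ⟨C, hC⟩ := hGbdd n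
    have := isFiniteMeasure_withDensity_ofReal_of_le
      (μ := gammaSeq η0 (fun k x => M k x) G n) hC
    show IsFiniteMeasure (M n ∘ₘ _)
    infer_instance

lemma integral_gammaSeq_succ [IsFiniteMeasure η0] [∀ n, IsFiniteKernel (M n)]
    (hGmeas : ∀ n, Measurable (G n)) (hGbdd : ∀ n, ∃ C, ∀ x, G n x ≤ C)
    (hGnonneg : ∀ n x, 0 ≤ G n x) (n : ℕ) {f : X (n + 1) → ℝ} (hf : Measurable f) {C : ℝ}
    (hC : ∀ x, |f x| ≤ C) :
    ∫ y, f y ∂(gammaSeq η0 (fun k x => M k x) G (n + 1))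
      = ∫ x, G n x * ∫ y, f y ∂(M n x) ∂(gammaSeq η0 (fun k x => M k x) G n) := by
  have := isFiniteMeasure_gammaSeq (η0 := η0) (M := M) hGbdd n
  obtain ⟨CG, hCG⟩ := hGbdd n
  have := isFiniteMeasure_withDensity_ofReal_of_le
    (μ := gammaSeq η0 (fun k x => M k x) G n) hCG
  rw [gammaSeq, integral_bind_kernel (κ := M n) (integrable_of_abs_le hf hC),
    integral_withDensity_eq_integral_toReal_smul (hGmeas n).ennreal_ofReal
      (.of_forall fun _ => ENNReal.ofReal_lt_top)]
  simp only [ENNReal.toReal_ofReal (hGnonneg n _), smul_eq_mul]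

end FeynmanKac

section IslandModel

variable {X : ℕ → Type*} [∀ n, MeasurableSpace (X n)] {η0 : Measure (X 0)}
  {M : ∀ n, Kernel (X n) (X (n + 1))} {G : ∀ n, X n → ℝ}
  {Ω : Type*} [MeasurableSpace Ω] {P : Measure Ω} {N : ℕ} {ξ : ∀ p, Ω → (Fin N → X p)}

theorem integral_empiricalMean_mul_prod_eq_integral_gammaSeq [IsProbabilityMeasure η0]
    [∀ n, IsMarkovKernel (M n)] (hGmeas : ∀ n, Measurable (G n))
    (hGbdd : ∀ n, ∃ C, ∀ x, G n x ≤ C) (hGpos : ∀ n x, 0 < G n x) [NeZero N]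
    (hchain : IsMarkovApprox (S := fun p => Fin N → X p) P (Measure.pi fun _ : Fin N => η0)
      (fun k x => bootStep (fun a => M k a) (G k) x) ξ)
    (m : ℕ) {h : X m → ℝ} (hh : Measurable h) (hhb : ∃ C, ∀ x, |h x| ≤ C) :
    ∫ ω, empiricalMean h (ξ m ω) * ∏ p ∈ range m, empiricalMean (G p) (ξ p ω) ∂P
      = ∫ x, h x ∂(gammaSeq η0 (fun k x => M k x) G m) := by
  induction m with
  | zero =>
    obtain ⟨C, hC⟩ := hhb
    simp only [range_zero, prod_empty, mul_one]
    rw [← integral_map (hchain.1 0).aemeasurable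
      (measurable_empiricalMean hh).aestronglyMeasurable, hchain.2.1,
      integral_empiricalMean_pi _ (integrable_of_abs_le hh hC)]
    rfl
  | succ m ih =>
    obtain ⟨C, hC⟩ := hhb
    have hGabs : ∀ p, ∃ C, ∀ x, |G p x| ≤ C := fun p =>
      (hGbdd p).imp fun C hC x => (abs_of_pos (hGpos p x)).trans_le (hC x)
    obtain ⟨CG, hCG⟩ := hGabs m
    set g : X m → ℝ := fun x => G m x * ∫ y, h y ∂(M m x)
    have hg : Measurable g :=
      (hGmeas m).mul (hh.stronglyMeasurable.integral_kernel (κ := M m)).measurable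
    have hgb : ∀ x, |g x| ≤ CG * C := fun x => by
      rw [abs_mul]
      exact mul_le_mul (hCG x) (abs_integral_le_of_abs_le hC) (abs_nonneg _)
        ((abs_nonneg _).trans (hCG x))
    have hmarkov := hchain.2.2 m (fun p => empiricalMean (G p))
      (fun p => measurable_empiricalMean (hGmeas p))
      (fun p => exists_abs_empiricalMean_le (hGabs p))
      (empiricalMean h) (measurable_empiricalMean hh) (exists_abs_empiricalMean_le ⟨C, hC⟩)
    calc ∫ ω, empiricalMean h (ξ (m + 1) ω) *
            ∏ p ∈ range (m + 1), empiricalMean (G p) (ξ p ω) ∂P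
        = ∫ ω, (∏ p ∈ range (m + 1), empiricalMean (G p) (ξ p ω)) *
            ∫ y, empiricalMean h y ∂(bootStep (fun a => M m a) (G m) (ξ m ω)) ∂P := by
          simp_rw [mul_comm (empiricalMean h _)]
          exact hmarkov
      _ = ∫ ω, empiricalMean g (ξ m ω) * ∏ p ∈ range m, empiricalMean (G p) (ξ p ω) ∂P := by
          congr with ω
          rw [prod_range_succ, mul_comm _ (empiricalMean (G m) _), mul_right_comm,
            empiricalMean_mul_integral_bootStep _ (hGpos m) _ hh hC]
      _ = ∫ x, g x ∂(gammaSeq η0 (fun k x => M k x) G m) := ih hg ⟨_, hgb⟩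
      _ = ∫ x, h x ∂(gammaSeq η0 (fun k x => M k x) G (m + 1)) :=
          (integral_gammaSeq_succ hGmeas hGbdd (fun n x => (hGpos n x).le) m hh hC).symm

end IslandModel

end FKisland

theorem statement6_general {X : ℕ → Type*} [∀ n, MeasurableSpace (X n)]
    (η0 : Measure (X 0)) [IsProbabilityMeasure η0]
    (M : ∀ n, Kernel (X n) (X (n + 1))) [∀ n, IsMarkovKernel (M n)]
    (G : ∀ n, X n → ℝ)
    (hGmeas : ∀ n, Measurable (G n))
    (hGbdd : ∀ n, ∃ C, ∀ x, G n x ≤ C)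
    (hGpos : ∀ n x, 0 < G n x)
    {Ω : Type*} [MeasurableSpace Ω] (P : Measure Ω)
    {N1 : ℕ} (hN1 : 1 ≤ N1)
    (ξ : ∀ p, Ω → (Fin N1 → X p))
    (hchain : IsMarkovApprox (S := fun p => Fin N1 → X p) P
      (Measure.pi fun _ : Fin N1 => η0)
      (fun k x => bootStep (fun a => M k a) (G k) x) ξ)
    (n : ℕ) (f : X n → ℝ) (hf : Measurable f) (hfb : ∃ C, ∀ x, |f x| ≤ C) :
    (∫ ω, ((N1 : ℝ)⁻¹ * ∑ i, f (ξ n ω i)) *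
        ∏ p ∈ Finset.range n, ((N1 : ℝ)⁻¹ * ∑ i, G p (ξ p ω i)) ∂P
      = ∫ x, f x ∂(gammaSeq (S := X) η0 (fun k x => M k x) G n))
    ∧ (∫ ω, ((N1 : ℝ)⁻¹ * ∑ i, f (ξ n ω i)) *
          ∏ p ∈ Finset.range n, ((N1 : ℝ)⁻¹ * ∑ i, G p (ξ p ω i)) ∂P) /
        (∫ ω, ∏ p ∈ Finset.range n, ((N1 : ℝ)⁻¹ * ∑ i, G p (ξ p ω i)) ∂P)
      = ∫ x, f x ∂(etaSeq (S := X) η0 (fun k x => M k x) G n) := by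
  have : NeZero N1 := ⟨Nat.one_le_iff_ne_zero.mp hN1⟩
  have := isFiniteMeasure_gammaSeq (η0 := η0) (M := M) hGbdd n
  have hunbiased := integral_empiricalMean_mul_prod_eq_integral_gammaSeq hGmeas hGbdd hGpos
    hchain n hf hfb
  have hmass : ∫ ω, ∏ p ∈ range n, empiricalMean (G p) (ξ p ω) ∂P
      = (gammaSeq η0 (fun k x => M k x) G n).real Set.univ := by
    simpa [empiricalMean_one] using integral_empiricalMean_mul_prod_eq_integral_gammaSeq
      hGmeas hGbdd hGpos hchain n (h := fun _ => 1) measurable_const ⟨1, by simp⟩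
  refine ⟨hunbiased, ?_⟩
  change (∫ ω, empiricalMean f (ξ n ω) * ∏ p ∈ range n, empiricalMean (G p) (ξ p ω) ∂P) /
    ∫ ω, ∏ p ∈ range n, empiricalMean (G p) (ξ p ω) ∂P = _
  rw [hunbiased, hmass, etaSeq, integral_smul_measure, ENNReal.toReal_inv, smul_eq_mul,
    div_eq_inv_mul, measureReal_def]

/-- **Theorem 2.1.** For the island Feynman-Kac model built from the
bootstrap particle transitions `boldM` and potentials `boldG_n(x) = N1⁻¹ Σ_i G_n(x^i)`,
with initial law `η_0^{⊗N1}`, and for the lifted function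
`F(x) = N1⁻¹ Σ_i f(x^i)`: `boldΓ_n(F) = γ_n(f)` and `boldη_n(F) = η_n(f)`. -/
theorem statement6 {X : ℕ → Type*} [∀ n, MeasurableSpace (X n)]
    (η0 : Measure (X 0)) [IsProbabilityMeasure η0]
    (M : ∀ n, Kernel (X n) (X (n + 1))) [∀ n, IsMarkovKernel (M n)]
    (G : ∀ n, X n → ℝ)
    (hGmeas : ∀ n, Measurable (G n))
    (hGbdd : ∀ n, ∃ C, ∀ x, G n x ≤ C)
    (hGpos : ∀ n x, 0 < G n x)
    {Ω : Type*} [MeasurableSpace Ω] (P : Measure Ω) [IsProbabilityMeasure P]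
    {N1 : ℕ} (hN1 : 1 ≤ N1)
    (ξ : ∀ p, Ω → (Fin N1 → X p))
    (hchain : IsMarkovApprox (S := fun p => Fin N1 → X p) P
      (Measure.pi fun _ : Fin N1 => η0)
      (fun k x => bootStep (fun a => M k a) (G k) x) ξ)
    (n : ℕ) (f : X n → ℝ) (hf : Measurable f) (hfb : ∃ C, ∀ x, |f x| ≤ C) :
    (∫ ω, ((N1 : ℝ)⁻¹ * ∑ i, f (ξ n ω i)) *
        ∏ p ∈ Finset.range n, ((N1 : ℝ)⁻¹ * ∑ i, G p (ξ p ω i)) ∂P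
      = ∫ x, f x ∂(gammaSeq (S := X) η0 (fun k x => M k x) G n))
    ∧ (∫ ω, ((N1 : ℝ)⁻¹ * ∑ i, f (ξ n ω i)) *
          ∏ p ∈ Finset.range n, ((N1 : ℝ)⁻¹ * ∑ i, G p (ξ p ω i)) ∂P) /
        (∫ ω, ∏ p ∈ Finset.range n, ((N1 : ℝ)⁻¹ * ∑ i, G p (ξ p ω i)) ∂P)
      = ∫ x, f x ∂(etaSeq (S := X) η0 (fun k x => M k x) G n) :=
  statement6_general η0 M G hGmeas hGbdd hGpos P hN1 ξ hchain n f hf hfb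
end
end

section
/- (Proposition 4.3, one-step variance comparison) Let μ be a probability measure on X_{p-1}, let ε ≥ 0 satisfy ε · ‖G_{p-1}‖_∞ ≤ 1, and let f be a bounded measurable function on X_p. Then μ[(S_{p-1,μ}(M_p f))²] − (Ψ_{p-1}(μ)(M_p f))² = μ[(S_{p-1,μ}(M_p f) − Ψ_{p-1}(μ)(M_p f))²] ≥ 0, and consequently the ε-bootstrap local asymptotic variance is no larger than the bootstrap one: μ[S_{p-1,μ} M_p f² − (S_{p-1,μ} M_p f)²] ≤ Ψ_{p-1}(μ)(M_p f²) − (Ψ_{p-1}(μ)(M_p f))². -/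
open MeasureTheory ProbabilityTheory Filter Finset
open scoped ENNReal NNReal Topology Classical

noncomputable section

open FKisland

/-! The ε-bootstrap kernel averages back to the Boltzmann-Gibbs measure, `μ S_μ = Ψ(μ)`.
Hence `x ↦ S_μ(M f)(x)` has `μ`-mean `Ψ(μ)(M f)`, the identity is the variance formula
for this function, and the comparison of local variances is Jensen's inequality
`(μ S_μ M f)² ≤ μ[(S_μ M f)²]`. -/

section BoundedFunctions

variable {α : Type*} [MeasurableSpace α] {μ : Measure α}

lemma abs_integral_le_of_forall_abs_le [IsProbabilityMeasure μ] {h : α → ℝ} {D : ℝ}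
    (hD : ∀ x, |h x| ≤ D) : |∫ x, h x ∂μ| ≤ D := by
  simpa using norm_integral_le_of_norm_le_const (μ := μ) (C := D)
    (.of_forall fun x => (Real.norm_eq_abs _).trans_le (hD x))

lemma integrable_of_forall_abs_le [IsFiniteMeasure μ] {h : α → ℝ} (hh : Measurable h)
    {D : ℝ} (hD : ∀ x, |h x| ≤ D) : Integrable h μ :=
  .of_bound hh.aestronglyMeasurable D (.of_forall fun x => (Real.norm_eq_abs _).trans_le (hD x))

lemma memLp_of_forall_abs_le [IsFiniteMeasure μ] {h : α → ℝ} (hh : Measurable h)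
    {D : ℝ} (hD : ∀ x, |h x| ≤ D) (p : ℝ≥0∞) : MemLp h p μ :=
  .of_bound hh.aestronglyMeasurable D (.of_forall fun x => (Real.norm_eq_abs _).trans_le (hD x))

lemma integral_sq_sub_sq_integral [IsProbabilityMeasure μ] {F : α → ℝ} (hF : MemLp F 2 μ) :
    ∫ x, F x ^ 2 ∂μ - (∫ x, F x ∂μ) ^ 2 = ∫ x, (F x - ∫ x, F x ∂μ) ^ 2 ∂μ := by
  rw [← variance_eq_integral hF.aestronglyMeasurable.aemeasurable, variance_eq_sub hF]
  rfl

end BoundedFunctions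

section BoltzmannGibbs

variable {α : Type*} [MeasurableSpace α] {G : α → ℝ} {μ : Measure α}

theorem integral_boltzmannGibbs (hGm : Measurable G) (hG0 : ∀ x, 0 ≤ G x)
    (hGi : Integrable G μ) (h : α → ℝ) :
    ∫ z, h z ∂(boltzmannGibbs G μ) = (∫ x, G x ∂μ)⁻¹ * ∫ x, G x * h x ∂μ := by
  have hG_toNNReal : (fun x => ENNReal.ofReal (G x)) = fun x => ((G x).toNNReal : ℝ≥0∞) :=
    rfl
  rw [boltzmannGibbs, integral_smul_measure,
    ← ofReal_integral_eq_lintegral_ofReal hGi (.of_forall hG0), hG_toNNReal,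
    integral_withDensity_eq_integral_smul hGm.real_toNNReal, ENNReal.toReal_inv,
    ENNReal.toReal_ofReal (integral_nonneg hG0), smul_eq_mul]
  simp only [NNReal.smul_def, Real.coe_toNNReal _ (hG0 _), smul_eq_mul]

theorem integral_pos_of_forall_pos [NeZero μ] (hGpos : ∀ x, 0 < G x) (hGi : Integrable G μ) :
    0 < ∫ x, G x ∂μ := by
  rw [integral_pos_iff_support_of_nonneg (fun x => (hGpos x).le) hGi,
    Function.support_eq_univ fun x => (hGpos x).ne']
  exact Measure.measure_univ_pos.mpr (NeZero.ne μ)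

theorem isProbabilityMeasure_boltzmannGibbs [NeZero μ] (hGpos : ∀ x, 0 < G x)
    (hGi : Integrable G μ) : IsProbabilityMeasure (boltzmannGibbs G μ) := by
  constructor
  rw [boltzmannGibbs, Measure.smul_apply, withDensity_apply _ MeasurableSet.univ,
    setLIntegral_univ, smul_eq_mul,
    ← ofReal_integral_eq_lintegral_ofReal hGi (.of_forall fun x => (hGpos x).le)]
  exact ENNReal.inv_mul_cancel
    (ENNReal.ofReal_pos.mpr (integral_pos_of_forall_pos hGpos hGi)).ne' ENNReal.ofReal_ne_top

end BoltzmannGibbs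

section EpsSelect

variable {α : Type*} [MeasurableSpace α] {G : α → ℝ} {ε : ℝ} {μ : Measure α}

theorem isProbabilityMeasure_epsSelect [IsProbabilityMeasure (boltzmannGibbs G μ)] {x : α}
    (h0 : 0 ≤ ε * G x) (h1 : ε * G x ≤ 1) : IsProbabilityMeasure (epsSelect G ε μ x) := by
  constructor
  rw [epsSelect, Measure.add_apply, Measure.smul_apply, Measure.smul_apply, measure_univ,
    measure_univ, smul_eq_mul, smul_eq_mul, mul_one, mul_one,
    ← ENNReal.ofReal_add h0 (sub_nonneg.mpr h1), add_sub_cancel, ENNReal.ofReal_one]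

theorem integral_epsSelect {x : α} (h0 : 0 ≤ ε * G x) (h1 : ε * G x ≤ 1) {h : α → ℝ}
    (hh : Measurable h) (hhΨ : Integrable h (boltzmannGibbs G μ)) :
    ∫ z, h z ∂(epsSelect G ε μ x)
      = ε * G x * h x + (1 - ε * G x) * ∫ z, h z ∂(boltzmannGibbs G μ) := by
  have hδ : Integrable h (ENNReal.ofReal (ε * G x) • Measure.dirac x) :=
    (integrable_dirac' hh.stronglyMeasurable enorm_lt_top).smul_measure ENNReal.ofReal_ne_top
  rw [epsSelect, integral_add_measure hδ (hhΨ.smul_measure ENNReal.ofReal_ne_top),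
    integral_smul_measure, integral_smul_measure, integral_dirac' h x hh.stronglyMeasurable,
    ENNReal.toReal_ofReal h0, ENNReal.toReal_ofReal (sub_nonneg.mpr h1), smul_eq_mul,
    smul_eq_mul]

variable [IsProbabilityMeasure μ]

theorem measurable_integral_epsSelect (hGm : Measurable G) (hGpos : ∀ x, 0 < G x)
    (hGi : Integrable G μ) (h0 : ∀ x, 0 ≤ ε * G x) (h1 : ∀ x, ε * G x ≤ 1) {h : α → ℝ}
    (hh : Measurable h) {D : ℝ} (hD : ∀ x, |h x| ≤ D) :
    Measurable fun x => ∫ z, h z ∂(epsSelect G ε μ x) := by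
  have hΨ := isProbabilityMeasure_boltzmannGibbs hGpos hGi
  simp only [integral_epsSelect (h0 _) (h1 _) hh (integrable_of_forall_abs_le hh hD)]
  fun_prop

theorem abs_integral_epsSelect_le (hGpos : ∀ x, 0 < G x) (hGi : Integrable G μ) {x : α}
    (h0 : 0 ≤ ε * G x) (h1 : ε * G x ≤ 1) {h : α → ℝ} {D : ℝ} (hD : ∀ x, |h x| ≤ D) :
    |∫ z, h z ∂(epsSelect G ε μ x)| ≤ D := by
  have hΨ := isProbabilityMeasure_boltzmannGibbs hGpos hGi
  have hS := isProbabilityMeasure_epsSelect (μ := μ) h0 h1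
  exact abs_integral_le_of_forall_abs_le hD

theorem memLp_integral_epsSelect (hGm : Measurable G) (hGpos : ∀ x, 0 < G x)
    (hGi : Integrable G μ) (h0 : ∀ x, 0 ≤ ε * G x) (h1 : ∀ x, ε * G x ≤ 1) {h : α → ℝ}
    (hh : Measurable h) {D : ℝ} (hD : ∀ x, |h x| ≤ D) (p : ℝ≥0∞) :
    MemLp (fun x => ∫ z, h z ∂(epsSelect G ε μ x)) p μ :=
  memLp_of_forall_abs_le (measurable_integral_epsSelect hGm hGpos hGi h0 h1 hh hD)
    (fun x => abs_integral_epsSelect_le hGpos hGi (h0 x) (h1 x) hD) p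

theorem integral_integral_epsSelect (hGm : Measurable G) (hGpos : ∀ x, 0 < G x)
    (hGi : Integrable G μ) (h0 : ∀ x, 0 ≤ ε * G x) (h1 : ∀ x, ε * G x ≤ 1) {h : α → ℝ}
    (hh : Measurable h) {D : ℝ} (hD : ∀ x, |h x| ≤ D) :
    ∫ x, ∫ z, h z ∂(epsSelect G ε μ x) ∂μ = ∫ z, h z ∂(boltzmannGibbs G μ) := by
  have hΨ := isProbabilityMeasure_boltzmannGibbs hGpos hGi
  have hGh : ∫ x, G x * h x ∂μ = (∫ x, G x ∂μ) * ∫ z, h z ∂(boltzmannGibbs G μ) := by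
    rw [integral_boltzmannGibbs hGm (fun x => (hGpos x).le) hGi,
      mul_inv_cancel_left₀ (integral_pos_of_forall_pos hGpos hGi).ne']
  have hGhi : Integrable (fun x => G x * h x) μ :=
    hGi.mul_bdd hh.aestronglyMeasurable
      (.of_forall fun x => (Real.norm_eq_abs _).trans_le (hD x))
  calc ∫ x, ∫ z, h z ∂(epsSelect G ε μ x) ∂μ
      = ∫ x, (ε * (G x * h x) + (1 - ε * G x) * ∫ z, h z ∂(boltzmannGibbs G μ)) ∂μ := by
        refine integral_congr_ae (.of_forall fun x => ?_)
        exact (integral_epsSelect (h0 x) (h1 x) hh (integrable_of_forall_abs_le hh hD)).trans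
          (by ring)
    _ = ε * ((∫ x, G x ∂μ) * ∫ z, h z ∂(boltzmannGibbs G μ))
          + (1 - ε * ∫ x, G x ∂μ) * ∫ z, h z ∂(boltzmannGibbs G μ) := by
        have hεG : Integrable (fun x => 1 - ε * G x) μ :=
          (integrable_const 1).sub (hGi.const_mul ε)
        rw [integral_add (hGhi.const_mul ε) (hεG.mul_const _),
          integral_const_mul, integral_mul_const, integral_sub (integrable_const 1)
          (hGi.const_mul ε), integral_const_mul, hGh, integral_const, probReal_univ, one_smul]
    _ = ∫ z, h z ∂(boltzmannGibbs G μ) := by ring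

end EpsSelect

/-- **Proposition 4.3, one-step variance comparison.**
`μ[(S_{p-1,μ}(M_p f))²] − (Ψ_{p-1}(μ)(M_p f))² = μ[(S_{p-1,μ}(M_p f) − Ψ_{p-1}(μ)(M_p f))²] ≥ 0`,
and consequently the ε-bootstrap local asymptotic variance is no larger than the
bootstrap one:
`μ[S_{p-1,μ} M_p f² − (S_{p-1,μ} M_p f)²] ≤ Ψ_{p-1}(μ)(M_p f²) − (Ψ_{p-1}(μ)(M_p f))²`. -/
theorem statement10 {α β : Type*} [MeasurableSpace α] [MeasurableSpace β]
    (M : Kernel α β) [IsMarkovKernel M]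
    (G : α → ℝ) (hGmeas : Measurable G) (hGpos : ∀ x, 0 < G x)
    (C : ℝ) (hGle : ∀ x, G x ≤ C)
    (ε : ℝ) (hε : 0 ≤ ε) (hεC : ε * C ≤ 1)
    (μ : Measure α) [IsProbabilityMeasure μ]
    (f : β → ℝ) (hf : Measurable f) (hfb : ∃ D, ∀ y, |f y| ≤ D) :
    (∫ x, (∫ z, (∫ y, f y ∂(M z)) ∂(epsSelect G ε μ x)) ^ 2 ∂μ
          - (∫ z, (∫ y, f y ∂(M z)) ∂(boltzmannGibbs G μ)) ^ 2
        = ∫ x, ((∫ z, (∫ y, f y ∂(M z)) ∂(epsSelect G ε μ x))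
              - ∫ z, (∫ y, f y ∂(M z)) ∂(boltzmannGibbs G μ)) ^ 2 ∂μ)
    ∧ (0 ≤ ∫ x, ((∫ z, (∫ y, f y ∂(M z)) ∂(epsSelect G ε μ x))
              - ∫ z, (∫ y, f y ∂(M z)) ∂(boltzmannGibbs G μ)) ^ 2 ∂μ)
    ∧ (∫ x, (∫ z, (∫ y, f y ^ 2 ∂(M z)) ∂(epsSelect G ε μ x))
            - (∫ z, (∫ y, f y ∂(M z)) ∂(epsSelect G ε μ x)) ^ 2 ∂μ
          ≤ (∫ z, (∫ y, f y ^ 2 ∂(M z)) ∂(boltzmannGibbs G μ))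
            - (∫ z, (∫ y, f y ∂(M z)) ∂(boltzmannGibbs G μ)) ^ 2) := by
  obtain ⟨D, hD⟩ := hfb
  have h0 : ∀ x, 0 ≤ ε * G x := fun x => mul_nonneg hε (hGpos x).le
  have h1 : ∀ x, ε * G x ≤ 1 := fun x => (mul_le_mul_of_nonneg_left (hGle x) hε).trans hεC
  have hGi : Integrable G μ :=
    integrable_of_forall_abs_le hGmeas fun x => (abs_of_pos (hGpos x)).trans_le (hGle x)
  have hMf : Measurable fun z => ∫ y, f y ∂(M z) :=
    hf.stronglyMeasurable.integral_kernel.measurable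
  have hMf2 : Measurable fun z => ∫ y, f y ^ 2 ∂(M z) :=
    (hf.pow_const 2).stronglyMeasurable.integral_kernel.measurable
  have hMfD : ∀ z, |∫ y, f y ∂(M z)| ≤ D := fun z => abs_integral_le_of_forall_abs_le hD
  have hMf2D : ∀ z, |∫ y, f y ^ 2 ∂(M z)| ≤ D ^ 2 := fun z =>
    abs_integral_le_of_forall_abs_le fun y =>
      abs_pow (f y) 2 ▸ pow_le_pow_left₀ (abs_nonneg _) (hD y) 2
  have hSMf := memLp_integral_epsSelect hGmeas hGpos hGi h0 h1 hMf hMfD 2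
  have hSMf2 := memLp_integral_epsSelect hGmeas hGpos hGi h0 h1 hMf2 hMf2D 1
  have hvar := integral_sq_sub_sq_integral hSMf
  rw [integral_integral_epsSelect hGmeas hGpos hGi h0 h1 hMf hMfD] at hvar
  have hdev_nonneg : 0 ≤ ∫ x, ((∫ z, (∫ y, f y ∂(M z)) ∂(epsSelect G ε μ x))
      - ∫ z, (∫ y, f y ∂(M z)) ∂(boltzmannGibbs G μ)) ^ 2 ∂μ :=
    integral_nonneg fun x => sq_nonneg _
  refine ⟨hvar, hdev_nonneg, ?_⟩
  rw [integral_sub (memLp_one_iff_integrable.mp hSMf2) hSMf.integrable_sq,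
    integral_integral_epsSelect hGmeas hGpos hGi h0 h1 hMf2 hMf2D]
  linarith
end
end

section
/- Let boldM_{p} be the ESS particle kernel from (X_{p-1} × ℝ₊)^{N1} to (X_p × ℝ₊)^{N1} associated with a threshold set Θ_{p-1,α}. Then for every weighted configuration ((x^1,w^1),…,(x^{N1},w^{N1})) with Σ_i w^i G_{p-1}(x^i) > 0 and every bounded measurable f on X_p, ∫ boldM_{p}(x, d y) [Σ_i w'^i f(y^i) / Σ_i w'^i] = Σ_i w^i G_{p-1}(x^i) M_p f(x^i) / Σ_i w^i G_{p-1}(x^i), where (y^i, w'^i) denote the new particles and weights; i.e., the identity holds on both the no-resampling and the resampling branches of the kernel. -/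
open MeasureTheory ProbabilityTheory Filter Finset
open scoped ENNReal NNReal Topology Classical

noncomputable section

open FKisland

/-! On both branches of `essStep` the new particles are independent, particle `i` having a
law `ν_i` and a deterministic weight `c_i`, so the expected weighted mean of `f` is
`Σ_i c_i ν_i(f) / Σ_i c_i`. Without resampling `ν_i = M(x^i, ·)` and `c_i = w^i G(x^i)`, which
is the claim directly. With resampling `c_i = 1` and every `ν_i` is the mixture
`Σ_j w^j G(x^j) M(x^j, ·) / Σ_k w^k G(x^k)`, whose mean of `f` is the same expression. -/

namespace FKisland

variable {ι β : Type*} [Fintype ι] [MeasurableSpace β]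

/-- The resampling law of `essStep`: the mixture `Σ_j c_j μ_j / Σ_k c_k`. -/
def mixture (c : ι → ℝ) (μ : ι → Measure β) : Measure β :=
  (∑ k, ENNReal.ofReal (c k))⁻¹ • ∑ j, ENNReal.ofReal (c j) • μ j

lemma isProbabilityMeasure_mixture {c : ι → ℝ} (hc : ∀ j, 0 ≤ c j) (hsum : 0 < ∑ j, c j)
    (μ : ι → Measure β) [∀ j, IsProbabilityMeasure (μ j)] :
    IsProbabilityMeasure (mixture c μ) := by
  constructor
  simp only [mixture, Measure.smul_apply, Measure.coe_finsetSum, Finset.sum_apply,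
    measure_univ, smul_eq_mul, mul_one]
  rw [← ENNReal.ofReal_sum_of_nonneg fun j _ => hc j]
  exact ENNReal.inv_mul_cancel (ENNReal.ofReal_pos.2 hsum).ne' ENNReal.ofReal_ne_top

lemma integral_mixture {c : ι → ℝ} (hc : ∀ j, 0 ≤ c j) (hsum : 0 < ∑ j, c j)
    {μ : ι → Measure β} {f : β → ℝ} (hf : ∀ j, Integrable f (μ j)) :
    ∫ y, f y ∂mixture c μ = (∑ j, c j * ∫ y, f y ∂μ j) / ∑ j, c j := by
  have hf' : ∀ j, Integrable f (ENNReal.ofReal (c j) • μ j) :=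
    fun j => (hf j).smul_measure ENNReal.ofReal_ne_top
  rw [mixture, integral_smul_measure, integral_finsetSum_measure fun j _ => hf' j,
    ← ENNReal.ofReal_sum_of_nonneg fun j _ => hc j, ENNReal.toReal_inv, ENNReal.toReal_ofReal hsum.le,
    smul_eq_mul, inv_mul_eq_div]
  congr 1
  refine Finset.sum_congr rfl fun j _ => ?_
  rw [integral_smul_measure, ENNReal.toReal_ofReal (hc j), smul_eq_mul]

lemma integral_weightedMean_pi_map_prodMk (ν : ι → Measure β) [∀ i, IsProbabilityMeasure (ν i)]
    (c : ι → ℝ) {f : β → ℝ} (hf : Measurable f) (hfi : ∀ i, Integrable f (ν i)) :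
    ∫ z, (∑ i, (z i).2 * f (z i).1) / ∑ i, (z i).2
        ∂Measure.pi (fun i => (ν i).map fun y => (y, c i))
      = (∑ i, c i * ∫ y, f y ∂ν i) / ∑ i, c i := by
  rw [← Measure.pi_map_pi fun i => measurable_prodMk_right.aemeasurable,
    integral_map (by fun_prop : Measurable fun (x : ι → β) i => (x i, c i)).aemeasurable
      (Measurable.aestronglyMeasurable (by fun_prop))]
  simp only
  rw [integral_div, integral_finsetSum _ fun i _ => (integrable_comp_eval (hfi i)).const_mul _]
  congr 1
  refine Finset.sum_congr rfl fun i _ => ?_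
  rw [integral_const_mul, integral_comp_eval (hfi i).aestronglyMeasurable]

end FKisland

theorem statement12_general {α β : Type*} [MeasurableSpace α] [MeasurableSpace β]
    (M : Kernel α β) [IsMarkovKernel M]
    (G : α → ℝ) (hGpos : ∀ x, 0 < G x)
    {N1 : ℕ} (a : ℝ)
    (xw : Fin N1 → α × ℝ) (hw : ∀ i, 0 ≤ (xw i).2)
    (hsum : 0 < ∑ i, (xw i).2 * G (xw i).1)
    (f : β → ℝ) (hf : Measurable f) (hfb : ∃ C, ∀ y, |f y| ≤ C) :
    ∫ z, (∑ i, (z i).2 * f (z i).1) / (∑ i, (z i).2)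
        ∂(essStep (fun c => M c) G a xw)
      = (∑ i, (xw i).2 * G (xw i).1 * ∫ y, f y ∂(M (xw i).1))
          / ∑ i, (xw i).2 * G (xw i).1 := by
  obtain ⟨C, hC⟩ := hfb
  have hfi : ∀ (μ : Measure β) [IsFiniteMeasure μ], Integrable f μ := fun μ _ =>
    .of_bound hf.aestronglyMeasurable C (ae_of_all _ hC)
  have hc : ∀ i, 0 ≤ (xw i).2 * G (xw i).1 := fun i => mul_nonneg (hw i) (hGpos _).le
  rw [essStep]
  split_ifs
  · exact integral_weightedMean_pi_map_prodMk _ _ hf fun i => hfi _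
  · have hN1 : N1 ≠ 0 := by
      rintro rfl
      simp at hsum
    have := isProbabilityMeasure_mixture hc hsum fun i => (M (xw i).1 : Measure β)
    change ∫ z, _ ∂Measure.pi (fun _ => (mixture _ fun i => (M (xw i).1 : Measure β)).map _) = _
    rw [integral_weightedMean_pi_map_prodMk _ _ hf fun _ => hfi _,
      integral_mixture hc hsum fun i => hfi _]
    simp only [one_mul, Finset.sum_const, Finset.card_univ, Fintype.card_fin, nsmul_eq_mul,
      mul_one]
    exact mul_div_cancel_left₀ _ (Nat.cast_ne_zero.2 hN1)

/-- One ESS selection/mutation step on weighted configurations: on both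
branches of the kernel, the conditional expectation of the weighted empirical average of
`f` equals `Σ_i w^i G_{p-1}(x^i) M_p f(x^i) / Σ_i w^i G_{p-1}(x^i)`. -/
theorem statement12 {α β : Type*} [MeasurableSpace α] [MeasurableSpace β]
    (M : Kernel α β) [IsMarkovKernel M]
    (G : α → ℝ) (hGmeas : Measurable G)
    (hGbdd : ∃ C, ∀ x, G x ≤ C) (hGpos : ∀ x, 0 < G x)
    {N1 : ℕ} (hN1 : 1 ≤ N1) (a : ℝ)
    (xw : Fin N1 → α × ℝ) (hw : ∀ i, 0 ≤ (xw i).2)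
    (hsum : 0 < ∑ i, (xw i).2 * G (xw i).1)
    (f : β → ℝ) (hf : Measurable f) (hfb : ∃ C, ∀ y, |f y| ≤ C) :
    ∫ z, (∑ i, (z i).2 * f (z i).1) / (∑ i, (z i).2)
        ∂(essStep (fun c => M c) G a xw)
      = (∑ i, (xw i).2 * G (xw i).1 * ∫ y, f y ∂(M (xw i).1))
          / ∑ i, (xw i).2 * G (xw i).1 :=
  statement12_general M G hGpos a xw hw hsum f hf hfb
end
end
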